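/- arXiv:2312.08355 — 2 statements merged into one kernel-verified Lean document; each statement's English description precedes it below -/
import Mathlib

section
/- Let G be a 3-connected plane graph and let X and W be the bounding cycles of two distinct faces of G. Then X ∩ W is either empty, a single vertex, or a single edge lying on the boundary of both faces. -/
open SimpleGraph

variable {V : Type} [Fintype V] [DecidableEq V]

/-- `S` is a (vertex) cut of `G`: deleting `S` leaves a disconnected graph. -/
def IsCut (G : SimpleGraph V) (S : Set V) : Prop :=
  ¬ (G.induce Sᶜ).Preconnected

/-- `S` is a minimal cut of `G`: it is a cut, and deleting any proper subset of `S`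
leaves a connected graph. -/
def IsMinimalCut (G : SimpleGraph V) (S : Set V) : Prop :=
  IsCut G S ∧ ∀ T : Set V, T ⊂ S → (G.induce Tᶜ).Connected

/-- `G` is cleavable if every minimal cut of `G` induces a connected subgraph. -/
def Cleavable (G : SimpleGraph V) : Prop :=
  ∀ S : Set V, IsMinimalCut G S → (G.induce S).Connected

/-- `G` is `k`-connected: it has more than `k` vertices and removing fewer
than `k` vertices leaves a connected graph. -/
def IsKConnected (k : ℕ) (G : SimpleGraph V) : Prop :=
  k < Nat.card V ∧ ∀ S : Set V, S.ncard < k → (G.induce Sᶜ).Connected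

/-- The dart-reversal permutation of the darts of `G`. -/
def dartFlip (G : SimpleGraph V) : Equiv.Perm G.Dart :=
  Function.Involutive.toPerm _ (SimpleGraph.Dart.symm_involutive (G := G))

/-- A rotation system (combinatorial embedding) of a graph `G`: a permutation of the
darts of `G` whose cycles are precisely the sets of darts leaving each vertex. -/
structure RotationSystem (G : SimpleGraph V) where
  rot : Equiv.Perm G.Dart
  rot_fst : ∀ d : G.Dart, (rot d).fst = d.fst
  rot_cyclic : ∀ d e : G.Dart, d.fst = e.fst → rot.SameCycle d e

namespace RotationSystem

variable {G : SimpleGraph V} (P : RotationSystem G)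

/-- The face-tracing permutation of a rotation system. -/
def facePerm : Equiv.Perm G.Dart := (dartFlip G).trans P.rot

/-- Two darts lie on the boundary of a common face. -/
def faceSetoid : Setoid G.Dart :=
  ⟨P.facePerm.SameCycle,
   ⟨fun _ => Equiv.Perm.SameCycle.refl _ _, fun h => h.symm, fun h h' => h.trans h'⟩⟩

/-- The faces of the embedding: orbits of the face-tracing permutation. -/
abbrev Face := Quotient P.faceSetoid

/-- The number of faces of the embedding. -/
noncomputable def numFaces : ℕ := Nat.card P.Face

/-- The set of vertices on the boundary of the face `F`. -/
def faceVerts (F : P.Face) : Set V :=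
  {v | ∃ d : G.Dart, Quotient.mk P.faceSetoid d = F ∧ d.fst = v}

/-- The length of (the closed boundary walk of) the face `F`. -/
noncomputable def faceLength (F : P.Face) : ℕ :=
  Nat.card {d : G.Dart // Quotient.mk P.faceSetoid d = F}

/-- A large face is a face of length at least 4. -/
def IsLargeFace (F : P.Face) : Prop := 4 ≤ P.faceLength F

/-- The edge `ab` lies on the boundary of the face `F`. -/
def EdgeOnFace (F : P.Face) (a b : V) : Prop :=
  ∃ d : G.Dart, Quotient.mk P.faceSetoid d = F ∧
    ((d.fst = a ∧ d.snd = b) ∨ (d.fst = b ∧ d.snd = a))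

end RotationSystem

/-- A plane embedding of `G`: a rotation system on a connected graph satisfying
Euler's formula `|V| - |E| + |F| = 2`. -/
structure PlaneEmbedding (G : SimpleGraph V) where
  rs : RotationSystem G
  connected : G.Connected
  euler : Nat.card V + rs.numFaces = Nat.card G.edgeSet + 2

/-- The large faces of a rotation system. -/
def RotationSystem.LargeFace {G : SimpleGraph V} (P : RotationSystem G) :=
  {F : P.Face // P.IsLargeFace F}

/-!
The darts of `G` carry three permutations: the rotation `σ`, whose orbits are the vertices, the
reversal `α`, whose orbits are the edges, and the face permutation `σ * α`, whose orbits are the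
faces. Euler's formula says that they have `|D| + 2` orbits in total, which is the equality case
of the hypermap inequality `#σ + #α + #(σ * α) ≤ |D| + 2 · #components`.

If the distinct faces `F₁`, `F₂` share vertices `u ≠ v`, cutting the sphere along a closed curve
through `F₁`, `u`, `F₂`, `v` gives a map with more orbits than the inequality allows for a
connected one; since `G - {u, v}` is connected and all degrees are at least three, this is only
possible when the curve crosses the edge `uv` at `u`, so that `uv` bounds both faces. A third
common vertex `w` would force the same for `uw`.
-/

open Equiv

namespace Setoid

variable {α : Type*} (s : Setoid α) (a b : α)

def glue : Setoid α where
  r x y := s x y ∨ (s x a ∧ s b y) ∨ (s x b ∧ s a y)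
  iseqv := by
    refine ⟨fun x => .inl (s.refl' x), ?_, ?_⟩
    · rintro x y (h | ⟨h₁, h₂⟩ | ⟨h₁, h₂⟩)
      exacts [.inl (s.symm' h), .inr (.inr ⟨s.symm' h₂, s.symm' h₁⟩),
        .inr (.inl ⟨s.symm' h₂, s.symm' h₁⟩)]
    · have ht : ∀ {x y z}, s x y → s y z → s x z := s.trans'
      have hs : ∀ {x y}, s x y → s y x := s.symm'
      rintro x y z (h | ⟨h₁, h₂⟩ | ⟨h₁, h₂⟩) (g | ⟨g₁, g₂⟩ | ⟨g₁, g₂⟩) <;> grind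

variable {s a b}

theorem le_glue : s ≤ s.glue a b := fun _ _ => .inl

theorem glue_rel : s.glue a b a b := .inr (.inl ⟨s.refl' a, s.refl' b⟩)

theorem glue_mono {t : Setoid α} (h : s ≤ t) : s.glue a b ≤ t.glue a b := by
  rintro x y (g | ⟨g₁, g₂⟩ | ⟨g₁, g₂⟩)
  exacts [.inl (h g), .inr (.inl ⟨h g₁, h g₂⟩), .inr (.inr ⟨h g₁, h g₂⟩)]

theorem glue_le {t : Setoid α} (h : s ≤ t) (hab : t a b) : s.glue a b ≤ t := by
  rintro x y (g | ⟨g₁, g₂⟩ | ⟨g₁, g₂⟩)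
  exacts [h g, t.trans' (h g₁) (t.trans' hab (h g₂)),
    t.trans' (h g₁) (t.trans' (t.symm' hab) (h g₂))]

theorem glue_eq_self (h : s a b) : s.glue a b = s :=
  le_antisymm (glue_le le_rfl h) le_glue

theorem card_quotient_le_of_le [Finite α] {t : Setoid α} (h : s ≤ t) :
    Nat.card (Quotient t) ≤ Nat.card (Quotient s) :=
  Nat.card_le_card_of_surjective (map_of_le h) (Quotient.ind fun x => ⟨⟦x⟧, rfl⟩)

theorem card_quotient_glue_add_one [Finite α] (h : ¬ s a b) :
    Nat.card (Quotient (s.glue a b)) + 1 = Nat.card (Quotient s) := by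
  let f : {q : Quotient s // q ≠ ⟦b⟧} → Quotient (s.glue a b) := fun q => map_of_le le_glue q.1
  have hf : f.Bijective := by
    constructor
    · rintro ⟨⟨x⟩, hx⟩ ⟨⟨y⟩, hy⟩ hxy
      have hx : ¬ s x b := fun h => hx (Quotient.sound h)
      have hy : ¬ s y b := fun h => hy (Quotient.sound h)
      have : s.glue a b x y := Quotient.exact hxy
      rcases this with g | ⟨g₁, g₂⟩ | ⟨g₁, g₂⟩
      · exact Subtype.ext (Quotient.sound g)
      · exact absurd (s.symm' g₂) hy
      · exact absurd g₁ hx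
    · rintro ⟨x⟩
      by_cases hx : s x b
      · exact ⟨⟨⟦a⟧, fun h' => h (Quotient.exact h')⟩,
          Quotient.sound (.inr (.inl ⟨s.refl' a, s.symm' hx⟩))⟩
      · exact ⟨⟨⟦x⟧, fun h' => hx (Quotient.exact h')⟩, rfl⟩
  have := Fintype.ofFinite (Quotient s)
  classical
  rw [← Nat.card_eq_of_bijective f hf, Nat.card_eq_fintype_card, Nat.card_eq_fintype_card,
    Fintype.card_subtype_compl, Fintype.card_subtype_eq]
  have : 0 < Fintype.card (Quotient s) := Fintype.card_pos_iff.2 ⟨⟦a⟧⟩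
  omega

end Setoid

namespace Equiv.Perm

variable {α : Type*} {f g : Perm α} {a b x y : α}

/-- Fixed points count as orbits, unlike in `cycleType`. -/
noncomputable def numOrbits (f : Perm α) : ℕ := Nat.card (Quotient (SameCycle.setoid f))

def jointOrbits (f g : Perm α) : Setoid α := SameCycle.setoid f ⊔ SameCycle.setoid g

noncomputable def numJointOrbits (f g : Perm α) : ℕ := Nat.card (Quotient (jointOrbits f g))

theorem SameCycle.jointOrbits_left (h : f.SameCycle x y) : jointOrbits f g x y :=
  le_sup_left (b := SameCycle.setoid g) h

theorem SameCycle.jointOrbits_right (h : g.SameCycle x y) : jointOrbits f g x y :=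
  le_sup_right (a := SameCycle.setoid f) h

theorem jointOrbits_one_left : jointOrbits 1 g = SameCycle.setoid g := by
  have : SameCycle.setoid (1 : Perm α) = ⊥ := Setoid.ext fun _ _ => sameCycle_one
  rw [jointOrbits, this, bot_sup_eq]

theorem eq_of_mem_pair_apply {c c' : α} (hc : c ≠ c') (hx : f (f x) ≠ x)
    (hcx : c = x ∨ c = f x) (hcy : c = y ∨ c = f y)
    (hcx' : c' = x ∨ c' = f x) (hcy' : c' = y ∨ c' = f y) : x = y := by
  grind

section DecidableEq

variable [DecidableEq α]

theorem swap_mul_pow_apply {n : ℕ} (h : ∀ k < n, (f ^ (k + 1)) x ≠ a ∧ (f ^ (k + 1)) x ≠ b) :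
    ((swap a b * f) ^ n) x = (f ^ n) x := by
  induction n with
  | zero => rfl
  | succ n ih =>
    obtain ⟨ha, hb⟩ := h n n.lt_succ_self
    rw [pow_succ', mul_apply, ih fun k hk => h k (hk.trans n.lt_succ_self), mul_apply,
      ← mul_apply f, ← pow_succ', swap_apply_of_ne_of_ne ha hb]

theorem swap_apply_apply_ne (hx : f x ≠ x) (hbx : b ≠ x) (hb : b ≠ f x) : swap a b (f x) ≠ x := by
  rw [Ne, swap_apply_eq_iff]
  rcases eq_or_ne x a with rfl | hxa
  · rw [swap_apply_left]
    exact hb.symm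
  · rwa [swap_apply_of_ne_of_ne hxa hbx.symm]

end DecidableEq

variable [Finite α]

theorem sameCycle_setoid_le {s : Setoid α} (hs : ∀ x, s x (f x)) : SameCycle.setoid f ≤ s := by
  intro x y hxy
  obtain ⟨n, rfl⟩ := hxy.exists_nat_pow_eq
  clear hxy
  induction n with
  | zero => exact s.refl' x
  | succ n ih => exact s.trans' ih (by rw [pow_succ', mul_apply]; exact hs _)

theorem numOrbits_le_card (f : Perm α) : numOrbits f ≤ Nat.card α :=
  Nat.card_le_card_of_surjective _ Quotient.mk_surjective

theorem SameCycle.exists_pow_lt {n : ℕ} (hn : 0 < n) (hx : (f ^ n) x = x)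
    (h : f.SameCycle x y) : ∃ k < n, (f ^ k) x = y := by
  obtain ⟨m, rfl⟩ := h.exists_nat_pow_eq
  refine ⟨m % n, Nat.mod_lt m hn, ?_⟩
  have hp : Function.IsPeriodicPt f n x := by
    rw [Function.IsPeriodicPt, Function.IsFixedPt, ← coe_pow, hx]
  rw [coe_pow, coe_pow, hp.iterate_mod_apply]

theorem exists_first_hit (f : Perm α) (a b : α) :
    ∃ n, ((f ^ (n + 1)) a = a ∨ (f ^ (n + 1)) a = b) ∧
      ∀ k < n, (f ^ (k + 1)) a ≠ a ∧ (f ^ (k + 1)) a ≠ b := by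
  classical
  have hex : ∃ n, (f ^ (n + 1)) a = a ∨ (f ^ (n + 1)) a = b :=
    ⟨orderOf f - 1, .inl (by rw [Nat.sub_add_cancel (orderOf_pos f), pow_orderOf_eq_one]; rfl)⟩
  refine ⟨Nat.find hex, Nat.find_spec hex, fun k hk => ?_⟩
  have := Nat.find_min hex hk
  tauto

theorem sameCycle_setoid_mul_le_jointOrbits : SameCycle.setoid (f * g) ≤ jointOrbits f g :=
  sameCycle_setoid_le fun _ =>
    (jointOrbits f g).trans' (SameCycle.jointOrbits_right ⟨1, rfl⟩)
      (SameCycle.jointOrbits_left ⟨1, rfl⟩)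

variable [DecidableEq α]

theorem sameCycle_swap_mul_of_not_sameCycle (h : ¬ f.SameCycle a b) :
    (swap a b * f).SameCycle a b := by
  obtain ⟨n, hn, hfirst⟩ := exists_first_hit f a b
  have ha : (f ^ (n + 1)) a = a := hn.resolve_right fun hb => h ⟨(n + 1 : ℕ), by rwa [zpow_natCast]⟩
  refine ⟨(n + 1 : ℕ), ?_⟩
  rw [zpow_natCast, pow_succ', mul_apply, swap_mul_pow_apply hfirst, mul_apply,
    ← mul_apply f, ← pow_succ', ha, swap_apply_left]

theorem not_sameCycle_swap_mul_of_sameCycle (hab : a ≠ b) (h : f.SameCycle a b) :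
    ¬ (swap a b * f).SameCycle a b := by
  obtain ⟨n, hn, hfirst⟩ := exists_first_hit f a b
  have hb : (f ^ (n + 1)) a = b := hn.resolve_left fun ha => by
    obtain ⟨k, hk, rfl⟩ := h.exists_pow_lt n.succ_pos ha
    cases k with
    | zero => exact hab rfl
    | succ k => exact (hfirst k (by omega)).2 rfl
  have hret : ((swap a b * f) ^ (n + 1)) a = a := by
    rw [pow_succ', mul_apply, swap_mul_pow_apply hfirst, mul_apply, ← mul_apply f, ← pow_succ',
      hb, swap_apply_right]
  rintro hg
  obtain ⟨k, hk, hkb⟩ := hg.exists_pow_lt n.succ_pos hret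
  cases k with
  | zero => exact hab hkb
  | succ k =>
    rw [swap_mul_pow_apply fun j hj => hfirst j (by omega)] at hkb
    exact (hfirst k (by omega)).2 hkb

theorem SameCycle.swap_mul (h : f.SameCycle x y) (ha : ¬ f.SameCycle x a)
    (hb : ¬ f.SameCycle x b) : (swap a b * f).SameCycle x y := by
  obtain ⟨n, rfl⟩ := h.exists_nat_pow_eq
  refine ⟨n, ?_⟩
  rw [zpow_natCast, swap_mul_pow_apply fun k _ =>
    ⟨fun h' => ha ⟨(k + 1 : ℕ), by rw [zpow_natCast, h']⟩,
     fun h' => hb ⟨(k + 1 : ℕ), by rw [zpow_natCast, h']⟩⟩]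

theorem glue_sameCycle_setoid_swap_mul_le :
    (SameCycle.setoid f).glue a b ≤ (SameCycle.setoid (swap a b * f)).glue a b := by
  refine Setoid.glue_le (sameCycle_setoid_le fun z => ?_) Setoid.glue_rel
  have hz : (swap a b * f).SameCycle z (swap a b (f z)) := ⟨1, rfl⟩
  by_cases ha : f z = a
  · rw [ha, swap_apply_left] at hz
    rw [ha]
    exact .inr (.inr ⟨hz, .refl _ _⟩)
  by_cases hb : f z = b
  · rw [hb, swap_apply_right] at hz
    rw [hb]
    exact .inr (.inl ⟨hz, .refl _ _⟩)
  rw [swap_apply_of_ne_of_ne ha hb] at hz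
  exact .inl hz

theorem glue_sameCycle_setoid_swap_mul :
    (SameCycle.setoid (swap a b * f)).glue a b = (SameCycle.setoid f).glue a b := by
  refine le_antisymm ?_ glue_sameCycle_setoid_swap_mul_le
  simpa only [← mul_assoc, swap_mul_self, one_mul] using
    glue_sameCycle_setoid_swap_mul_le (f := swap a b * f) (a := a) (b := b)

theorem sameCycle_setoid_swap_mul_of_not_sameCycle (h : ¬ f.SameCycle a b) :
    SameCycle.setoid (swap a b * f) = (SameCycle.setoid f).glue a b := by
  rw [← glue_sameCycle_setoid_swap_mul, Setoid.glue_eq_self]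
  exact sameCycle_swap_mul_of_not_sameCycle h

theorem numOrbits_swap_mul_add_one_of_not_sameCycle (h : ¬ f.SameCycle a b) :
    numOrbits (swap a b * f) + 1 = numOrbits f := by
  rw [numOrbits, sameCycle_setoid_swap_mul_of_not_sameCycle h]
  exact Setoid.card_quotient_glue_add_one h

theorem numOrbits_swap_mul_of_sameCycle (hab : a ≠ b) (h : f.SameCycle a b) :
    numOrbits (swap a b * f) = numOrbits f + 1 := by
  have := numOrbits_swap_mul_add_one_of_not_sameCycle (not_sameCycle_swap_mul_of_sameCycle hab h)
  rwa [← mul_assoc, swap_mul_self, one_mul, eq_comm] at this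

theorem jointOrbits_swap_mul_le : jointOrbits (swap a b * f) g ≤ (jointOrbits f g).glue a b := by
  refine sup_le ?_ (le_sup_right.trans Setoid.le_glue)
  calc SameCycle.setoid (swap a b * f)
      ≤ (SameCycle.setoid (swap a b * f)).glue a b := Setoid.le_glue
    _ = (SameCycle.setoid f).glue a b := glue_sameCycle_setoid_swap_mul
    _ ≤ (jointOrbits f g).glue a b := Setoid.glue_mono le_sup_left

/-- Euler's inequality for hypermaps: the genus of the hypermap `(f, g)` is nonnegative. -/
theorem numOrbits_add_numOrbits_add_numOrbits_mul_le (f g : Perm α) :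
    numOrbits f + numOrbits g + numOrbits (f * g) ≤ Nat.card α + 2 * numJointOrbits f g := by
  induction hn : Nat.card α - numOrbits f using Nat.strong_induction_on generalizing f with
  | _ n ih =>
    by_cases hf : f = 1
    · subst hf
      have : numJointOrbits 1 g = numOrbits g := by rw [numJointOrbits, jointOrbits_one_left]; rfl
      have := numOrbits_le_card (1 : Perm α)
      rw [one_mul]
      omega
    obtain ⟨a, ha⟩ : ∃ a, f a ≠ a := not_forall.1 fun h => hf (Equiv.ext h)
    set b := f a
    have hab : a ≠ b := Ne.symm ha
    set f' := swap a b * f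
    have hf' : f = swap a b * f' := by simp only [f', ← mul_assoc, swap_mul_self, one_mul]
    have hsplit : numOrbits f' = numOrbits f + 1 := numOrbits_swap_mul_of_sameCycle hab ⟨1, rfl⟩
    have hfg : f * g = swap a b * (f' * g) := by rw [hf', mul_assoc]
    have IH := ih _ (by have := numOrbits_le_card f'; omega) f' rfl
    have hjoint : jointOrbits f g ≤ (jointOrbits f' g).glue a b := hf' ▸ jointOrbits_swap_mul_le
    by_cases hconn : jointOrbits f' g a b
    · have hle : numJointOrbits f' g ≤ numJointOrbits f g :=
        Setoid.card_quotient_le_of_le (Setoid.glue_eq_self hconn ▸ hjoint)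
      have hmul : numOrbits (f * g) ≤ numOrbits (f' * g) + 1 := by
        rw [hfg]
        by_cases hsc : (f' * g).SameCycle a b
        · rw [numOrbits_swap_mul_of_sameCycle hab hsc]
        · have := numOrbits_swap_mul_add_one_of_not_sameCycle hsc
          omega
      omega
    · have hmul : numOrbits (f * g) + 1 = numOrbits (f' * g) :=
        hfg ▸ numOrbits_swap_mul_add_one_of_not_sameCycle
          fun h => hconn (sameCycle_setoid_mul_le_jointOrbits h)
      have hle : numJointOrbits f' g ≤ numJointOrbits f g + 1 := by
        have := Setoid.card_quotient_glue_add_one hconn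
        have := Setoid.card_quotient_le_of_le hjoint
        unfold numJointOrbits
        omega
      omega

/-- The two transpositions split two cycles of `f`; on `f * g` the first one merges the cycles of
`d₁` and `d₂` and the second one splits them again. -/
theorem add_two_le_numJointOrbits_swap_mul_swap_mul {d₁ d₂ e₁ e₂ : α}
    (hd : f.SameCycle d₁ d₂) (he : f.SameCycle e₁ e₂) (hde : ¬ f.SameCycle d₁ e₁)
    (h₁ : (f * g).SameCycle d₁ e₁) (h₂ : (f * g).SameCycle d₂ e₂)
    (h₁₂ : ¬ (f * g).SameCycle d₁ d₂) :
    numOrbits f + numOrbits g + numOrbits (f * g) + 2 ≤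
      Nat.card α + 2 * numJointOrbits (swap e₁ e₂ * (swap d₁ d₂ * f)) g := by
  have hd₁₂ : d₁ ≠ d₂ := by rintro rfl; exact h₁₂ .rfl
  have he₁₂ : e₁ ≠ e₂ := by rintro rfl; exact h₁₂ (h₁.trans h₂.symm)
  have hf' := numOrbits_swap_mul_of_sameCycle hd₁₂ hd
  have hf'' := numOrbits_swap_mul_of_sameCycle he₁₂ (he.swap_mul (fun h => hde h.symm)
    fun h => hde (hd.trans h.symm))
  have hfg' := numOrbits_swap_mul_add_one_of_not_sameCycle h₁₂
  have he' : (swap d₁ d₂ * (f * g)).SameCycle e₁ e₂ := by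
    change SameCycle.setoid _ e₁ e₂
    rw [sameCycle_setoid_swap_mul_of_not_sameCycle h₁₂]
    exact .inr (.inl ⟨h₁.symm, h₂⟩)
  have hfg'' := numOrbits_swap_mul_of_sameCycle he₁₂ he'
  have euler := numOrbits_add_numOrbits_add_numOrbits_mul_le (swap e₁ e₂ * (swap d₁ d₂ * f)) g
  simp only [mul_assoc] at euler hfg''
  omega

end Equiv.Perm

section

variable {V : Type} {G : SimpleGraph V} {τ : Perm G.Dart}

namespace SimpleGraph

theorem Dart.fst_swap_mul_apply [DecidableEq V] {d₁ d₂ : G.Dart} (h : d₁.fst = d₂.fst)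
    (hτ : ∀ d, (τ d).fst = d.fst) (d : G.Dart) : ((swap d₁ d₂ * τ) d).fst = d.fst := by
  rw [Perm.mul_apply, ← hτ d]
  rcases eq_or_ne (τ d) d₁ with h₁ | h₁
  · rw [h₁, swap_apply_left, h]
  rcases eq_or_ne (τ d) d₂ with h₂ | h₂
  · rw [h₂, swap_apply_right, h]
  rw [swap_apply_of_ne_of_ne h₁ h₂]

theorem IsKConnected.preconnected_induce_compl_pair (h3 : IsKConnected 3 G) (u v : V) :
    (G.induce ({u, v}ᶜ : Set V)).Preconnected :=
  (h3.2 _ ((Set.ncard_insert_le u {v}).trans_lt (by rw [Set.ncard_singleton]; omega))).preconnected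

theorem jointOrbits_dartFlip_symm (d : G.Dart) : Perm.jointOrbits τ (dartFlip G) d d.symm :=
  Perm.SameCycle.jointOrbits_right ⟨1, rfl⟩

theorem jointOrbits_dartFlip_of_fst_notMem {S : Set V} (hS : (G.induce Sᶜ).Preconnected)
    (hτ : ∀ d e : G.Dart, d.fst = e.fst → d.fst ∉ S → τ.SameCycle d e)
    {d e : G.Dart} (hd : d.fst ∉ S) (he : e.fst ∉ S) : Perm.jointOrbits τ (dartFlip G) d e := by
  set R := Perm.jointOrbits τ (dartFlip G)
  suffices ∀ (x y : ↥Sᶜ) (_ : (G.induce Sᶜ).Walk x y) (d e : G.Dart), d.fst = x → e.fst = y →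
      R d e by
    obtain ⟨p⟩ := hS ⟨d.fst, hd⟩ ⟨e.fst, he⟩
    exact this _ _ p d e rfl rfl
  intro x y p
  induction p with
  | @nil x =>
    intro d e hd he
    exact (hτ d e (hd.trans he.symm) (hd ▸ x.prop)).jointOrbits_left
  | @cons x _ _ h _ ih =>
    intro d e hd he
    let t : G.Dart := ⟨(_, _), h⟩
    exact R.trans' (hτ d t hd (hd ▸ x.prop)).jointOrbits_left
      (R.trans' (jointOrbits_dartFlip_symm t) (ih t.symm e rfl he))

variable [Finite V]

instance Dart.finite : Finite G.Dart :=
  Finite.of_injective _ fun d e => Dart.ext d e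

theorem Dart.fst_eq_of_sameCycle (hτ : ∀ d, (τ d).fst = d.fst) {d e : G.Dart}
    (h : τ.SameCycle d e) : d.fst = e.fst :=
  Perm.sameCycle_setoid_le (s := Setoid.ker fun d : G.Dart => d.fst) (fun d => (hτ d).symm) h

theorem _root_.Equiv.Perm.SameCycle.swap_mul_of_fst_ne [DecidableEq V]
    (hτ : ∀ d, (τ d).fst = d.fst) {d e d₁ d₂ : G.Dart} (h : τ.SameCycle d e)
    (h₁ : d.fst ≠ d₁.fst) (h₂ : d.fst ≠ d₂.fst) :
    (swap d₁ d₂ * τ).SameCycle d e :=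
  h.swap_mul (fun h' => h₁ (Dart.fst_eq_of_sameCycle hτ h'))
    (fun h' => h₂ (Dart.fst_eq_of_sameCycle hτ h'))

theorem card_dart_eq_two_mul_card_edgeSet (G : SimpleGraph V) :
    Nat.card G.Dart = 2 * Nat.card G.edgeSet := by
  have := Fintype.ofFinite V
  classical
  rw [Nat.card_eq_fintype_card, Nat.card_eq_fintype_card, dart_card_eq_twice_card_edges,
    edgeFinset_card]

theorem numOrbits_dartFlip (G : SimpleGraph V) :
    Perm.numOrbits (dartFlip G) = Nat.card G.edgeSet := by
  let toEdge : Quotient (Perm.SameCycle.setoid (dartFlip G)) → G.edgeSet :=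
    Quotient.lift (fun d => ⟨d.edge, d.edge_mem⟩) fun _ _ h => Subtype.ext <|
      Perm.sameCycle_setoid_le (s := Setoid.ker Dart.edge) (fun d => (Dart.edge_symm d).symm) h
  refine Nat.card_eq_of_bijective toEdge ⟨?_, ?_⟩
  · rintro ⟨d⟩ ⟨d'⟩ h
    rcases (dart_edge_eq_iff d d').1 (congrArg Subtype.val h) with rfl | rfl
    · rfl
    · exact Quotient.sound ⟨1, rfl⟩
  · rintro ⟨e, he⟩
    induction e using Sym2.ind
    exact ⟨⟦⟨_, he⟩⟧, rfl⟩

theorem IsKConnected.three_le_ncard_neighborSet (h3 : IsKConnected 3 G) (u : V) :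
    3 ≤ (G.neighborSet u).ncard := by
  by_contra! hlt
  obtain ⟨w, hw⟩ : ∃ w, w ∉ insert u (G.neighborSet u) := by
    by_contra! hall
    have := Set.ncard_le_ncard (s := Set.univ) (fun w _ => hall w) (Set.toFinite _)
    have := Set.ncard_insert_le u (G.neighborSet u)
    rw [Set.ncard_univ] at *
    have := h3.1
    omega
  rw [Set.mem_insert_iff, not_or] at hw
  obtain ⟨p⟩ := (h3.2 _ hlt).preconnected ⟨u, G.irrefl⟩ ⟨w, hw.2⟩
  cases p with
  | nil => exact hw.1 rfl
  | @cons _ c _ h _ => exact c.prop h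

theorem IsKConnected.exists_dart_fst_eq (h3 : IsKConnected 3 G) (u : V) :
    ∃ d : G.Dart, d.fst = u :=
  have : (G.neighborSet u).ncard ≠ 0 := by have := h3.three_le_ncard_neighborSet u; omega
  (Set.nonempty_of_ncard_ne_zero this).elim fun w hw => ⟨⟨(u, w), hw⟩, rfl⟩

theorem exists_jointOrbits_dartFlip_fst_notMem {u v : V} (hτfst : ∀ d, (τ d).fst = d.fst)
    (hloop : ∀ d : G.Dart, d.fst = u → d.snd = v → τ d ≠ d) {d : G.Dart} (hd : d.fst = u) :
    ∃ d', d'.fst ∉ ({u, v} : Set V) ∧ Perm.jointOrbits τ (dartFlip G) d d' := by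
  by_contra! hstuck
  have hsnd : ∀ t, τ.SameCycle d t → t.snd = v := by
    intro t ht
    by_contra htv
    have htu : t.snd ≠ u := (Dart.fst_eq_of_sameCycle hτfst ht ▸ hd) ▸ (G.ne_of_adj t.adj).symm
    exact hstuck t.symm (by simp [htu, htv])
      ((Perm.jointOrbits τ (dartFlip G)).trans' ht.jointOrbits_left (jointOrbits_dartFlip_symm t))
  refine hloop d hd (hsnd d .rfl) (Dart.ext _ _ (Prod.ext (hτfst d) ?_))
  rw [hsnd (τ d) ⟨1, rfl⟩, hsnd d .rfl]

theorem jointOrbits_dartFlip_of_compl_pair {u v : V}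
    (hS : (G.induce ({u, v}ᶜ : Set V)).Preconnected) (hτfst : ∀ d, (τ d).fst = d.fst)
    (hτ : ∀ d e : G.Dart, d.fst = e.fst → d.fst ∉ ({u, v} : Set V) → τ.SameCycle d e)
    (hloop : ∀ d : G.Dart, d.fst = u → d.snd = v → τ d ≠ d) (d e : G.Dart) :
    Perm.jointOrbits τ (dartFlip G) d e := by
  set S : Set V := {u, v}
  set R := Perm.jointOrbits τ (dartFlip G)
  have hout : ∀ d : G.Dart, ∃ d', d'.fst ∉ S ∧ R d d' := by
    intro d
    by_cases hd : d.fst ∈ S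
    swap
    · exact ⟨d, hd, R.refl' d⟩
    rcases hd with hd | hd
    · exact exists_jointOrbits_dartFlip_fst_notMem hτfst hloop hd
    by_cases hs : d.snd ∈ S
    · have hdu : d.symm.fst = u := by
        rcases hs with hs | hs
        · exact hs
        · exact absurd (hd.trans hs.symm) (G.ne_of_adj d.adj)
      obtain ⟨d', hd', hdd'⟩ := exists_jointOrbits_dartFlip_fst_notMem hτfst hloop hdu
      exact ⟨d', hd', R.trans' (jointOrbits_dartFlip_symm d) hdd'⟩
    · exact ⟨d.symm, hs, jointOrbits_dartFlip_symm d⟩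
  obtain ⟨d', hd', hdd'⟩ := hout d
  obtain ⟨e', he', hee'⟩ := hout e
  exact R.trans' hdd' (R.trans' (jointOrbits_dartFlip_of_fst_notMem hS hτ hd' he') (R.symm' hee'))

end SimpleGraph

namespace RotationSystem

variable (P : RotationSystem G)

theorem numOrbits_facePerm : Perm.numOrbits P.facePerm = P.numFaces := rfl

theorem edgeOnFace_of_eq_or_eq_rot {c d : G.Dart} (hc : c = d ∨ c = P.rot d) :
    P.EdgeOnFace (Quotient.mk _ c) d.fst d.snd := by
  rcases hc with rfl | rfl
  · exact ⟨c, rfl, .inl ⟨rfl, rfl⟩⟩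
  · exact ⟨d.symm, Quotient.sound ⟨1, rfl⟩, .inr ⟨rfl, rfl⟩⟩

variable [Finite V]

theorem numOrbits_rot (h : ∀ v, ∃ d : G.Dart, d.fst = v) : Perm.numOrbits P.rot = Nat.card V :=
  Nat.card_eq_of_bijective
    (Quotient.lift (fun d : G.Dart => d.fst) fun _ _ => Dart.fst_eq_of_sameCycle P.rot_fst)
    ⟨by rintro ⟨d⟩ ⟨e⟩ h; exact Quotient.sound (P.rot_cyclic d e h),
      fun v => (h v).elim fun d hd => ⟨⟦d⟧, hd⟩⟩

theorem rot_rot_apply_ne {d : G.Dart} (hdeg : 3 ≤ (G.neighborSet d.fst).ncard) :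
    P.rot (P.rot d) ≠ d := by
  intro h
  replace h : (P.rot ^ 2) d = d := h
  have hsub : G.neighborSet d.fst ⊆ {d.snd, (P.rot d).snd} := by
    intro w hw
    obtain ⟨k, hk, hkw⟩ := (P.rot_cyclic d ⟨(d.fst, w), hw⟩ rfl).exists_pow_lt two_pos h
    interval_cases k
    · exact .inl (congrArg (fun d : G.Dart => d.snd) hkw).symm
    · exact .inr (congrArg (fun d : G.Dart => d.snd) hkw).symm
  have := Set.ncard_le_ncard hsub (Set.toFinite _)
  have := Set.ncard_insert_le d.snd {(P.rot d).snd}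
  rw [Set.ncard_singleton] at this
  omega

theorem rot_apply_ne {d : G.Dart} (hdeg : 3 ≤ (G.neighborSet d.fst).ncard) : P.rot d ≠ d :=
  fun h => P.rot_rot_apply_ne hdeg (by rw [h, h])

end RotationSystem

namespace PlaneEmbedding

variable [Finite V] (P : PlaneEmbedding G)

theorem numOrbits_rot_add_numOrbits_dartFlip_add_numOrbits_facePerm
    (h : ∀ v, ∃ d : G.Dart, d.fst = v) :
    Perm.numOrbits P.rs.rot + Perm.numOrbits (dartFlip G) + Perm.numOrbits P.rs.facePerm =
      Nat.card G.Dart + 2 := by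
  rw [P.rs.numOrbits_rot h, numOrbits_dartFlip, P.rs.numOrbits_facePerm,
    card_dart_eq_two_mul_card_edgeSet]
  have := P.euler
  omega

variable [DecidableEq V]

/-- Applying `swap d₁ d₂` and `swap e₁ e₂` to the rotation cuts the sphere along a closed curve
through `u` and `v` that runs inside the face of `d₁` and `e₁` and inside the face of `d₂` and
`e₂`. If these faces differ, the cut adds two vertex orbits and keeps the number of faces, so by
Euler's formula the new map is disconnected. Yet every dart stays joined to `G - {u, v}`, unless
`hloop` fails and the dart `u → v` becomes a vertex of its own. -/
theorem sameCycle_facePerm_of_corners (h3 : IsKConnected 3 G) {u v : V} (huv : u ≠ v)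
    {d₁ d₂ e₁ e₂ : G.Dart} (hd₁ : d₁.fst = u) (hd₂ : d₂.fst = u) (he₁ : e₁.fst = v)
    (he₂ : e₂.fst = v) (h₁ : P.rs.facePerm.SameCycle d₁ e₁) (h₂ : P.rs.facePerm.SameCycle d₂ e₂)
    (hloop : ∀ d : G.Dart, d.fst = u → d.snd = v → swap d₁ d₂ (P.rs.rot d) ≠ d) :
    P.rs.facePerm.SameCycle d₁ d₂ := by
  by_contra h₁₂
  set σ' := swap d₁ d₂ * P.rs.rot
  set τ := swap e₁ e₂ * σ'
  have hσ'fst := Dart.fst_swap_mul_apply (hd₁.trans hd₂.symm) P.rs.rot_fst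
  have hτfst := Dart.fst_swap_mul_apply (he₁.trans he₂.symm) hσ'fst
  have hτ : ∀ d e : G.Dart, d.fst = e.fst → d.fst ∉ ({u, v} : Set V) → τ.SameCycle d e := by
    intro d e hde hd
    simp only [Set.mem_insert_iff, Set.mem_singleton_iff, not_or] at hd
    exact ((P.rs.rot_cyclic d e hde).swap_mul_of_fst_ne P.rs.rot_fst (hd₁ ▸ hd.1)
      (hd₂ ▸ hd.1)).swap_mul_of_fst_ne hσ'fst (he₁ ▸ hd.2) (he₂ ▸ hd.2)
  have hτloop : ∀ d : G.Dart, d.fst = u → d.snd = v → τ d ≠ d := by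
    intro d hd hdv
    have hu : (σ' d).fst = u := (hσ'fst d).trans hd
    have hne : ∀ {e : G.Dart}, e.fst = v → σ' d ≠ e := fun he h => huv (hu.symm.trans (h ▸ he))
    change swap e₁ e₂ (σ' d) ≠ d
    rw [swap_apply_of_ne_of_ne (hne he₁) (hne he₂)]
    exact hloop d hd hdv
  have hconn : Perm.numJointOrbits τ (dartFlip G) ≤ 1 :=
    Finite.card_le_one_iff_subsingleton.2 ⟨Quotient.ind₂ fun d e => Quotient.sound <|
      jointOrbits_dartFlip_of_compl_pair (h3.preconnected_induce_compl_pair u v) hτfst hτ hτloop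
        d e⟩
  have hcount : Perm.numOrbits P.rs.rot + Perm.numOrbits (dartFlip G) +
      Perm.numOrbits P.rs.facePerm + 2 ≤ Nat.card G.Dart + 2 * Perm.numJointOrbits τ (dartFlip G) :=
    Perm.add_two_le_numJointOrbits_swap_mul_swap_mul
      (P.rs.rot_cyclic d₁ d₂ (hd₁.trans hd₂.symm)) (P.rs.rot_cyclic e₁ e₂ (he₁.trans he₂.symm))
      (fun h => huv (hd₁.symm.trans ((Dart.fst_eq_of_sameCycle P.rs.rot_fst h).trans he₁)))
      h₁ h₂ h₁₂
  have heuler := P.numOrbits_rot_add_numOrbits_dartFlip_add_numOrbits_facePerm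
    h3.exists_dart_fst_eq
  omega

theorem exists_dart_forall_eq_or_eq_rot (h3 : IsKConnected 3 G) {F₁ F₂ : P.rs.Face}
    (hne : F₁ ≠ F₂) {u v : V} (huv : u ≠ v) (hu : u ∈ P.rs.faceVerts F₁ ∩ P.rs.faceVerts F₂)
    (hv : v ∈ P.rs.faceVerts F₁ ∩ P.rs.faceVerts F₂) :
    ∃ d : G.Dart, d.fst = u ∧ d.snd = v ∧ ∀ e : G.Dart, e.fst = u →
      (Quotient.mk _ e = F₁ ∨ Quotient.mk _ e = F₂) → e = d ∨ e = P.rs.rot d := by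
  obtain ⟨⟨c₁, hc₁, hc₁u⟩, ⟨c₂, hc₂, hc₂u⟩⟩ := hu
  obtain ⟨⟨b₁, hb₁, hb₁v⟩, ⟨b₂, hb₂, hb₂v⟩⟩ := hv
  have hcut : ∀ d₁ d₂ : G.Dart, d₁.fst = u → d₂.fst = u → Quotient.mk _ d₁ = F₁ →
      Quotient.mk _ d₂ = F₂ →
      (∀ d : G.Dart, d.fst = u → d.snd = v → swap d₁ d₂ (P.rs.rot d) ≠ d) → False := by
    intro d₁ d₂ hd₁ hd₂ hF₁ hF₂ hloop
    refine hne (hF₁.symm.trans (Eq.trans (Quotient.sound ?_) hF₂))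
    exact P.sameCycle_facePerm_of_corners h3 huv hd₁ hd₂ hb₁v hb₂v
      (Quotient.exact (hF₁.trans hb₁.symm)) (Quotient.exact (hF₂.trans hb₂.symm)) hloop
  by_cases hadj : G.Adj u v
  swap
  · exact (hcut c₁ c₂ hc₁u hc₂u hc₁ hc₂ fun d hd hdv => absurd (hd ▸ hdv ▸ d.adj) hadj).elim
  let d₀ : G.Dart := ⟨(u, v), hadj⟩
  have hd₀ : ∀ d : G.Dart, d.fst = u → d.snd = v → d = d₀ := fun d hd hdv =>
    Dart.ext _ _ (Prod.ext hd hdv)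
  have hrot : P.rs.rot d₀ ≠ d₀ := P.rs.rot_apply_ne (h3.three_le_ncard_neighborSet u)
  refine ⟨d₀, rfl, rfl, fun e heu heF => ?_⟩
  by_contra! he
  rcases heF with heF | heF
  · refine hcut e c₂ heu hc₂u heF hc₂ fun d hd hdv => ?_
    rw [hd₀ d hd hdv, swap_comm]
    exact Perm.swap_apply_apply_ne hrot he.1 he.2
  · refine hcut c₁ e hc₁u heu hc₁ heF fun d hd hdv => ?_
    rw [hd₀ d hd hdv]
    exact Perm.swap_apply_apply_ne hrot he.1 he.2

end PlaneEmbedding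

end

/-- In a 3-connected plane graph, the bounding cycles of two distinct faces
intersect in the empty set, a single vertex, or a single edge lying on both faces. -/
theorem stmt_7 (G : SimpleGraph V) (P : PlaneEmbedding G) (h3 : IsKConnected 3 G)
    (F₁ F₂ : P.rs.Face) (hne : F₁ ≠ F₂) :
    P.rs.faceVerts F₁ ∩ P.rs.faceVerts F₂ = ∅ ∨
    (∃ v : V, P.rs.faceVerts F₁ ∩ P.rs.faceVerts F₂ = {v}) ∨
    (∃ a b : V, G.Adj a b ∧ P.rs.faceVerts F₁ ∩ P.rs.faceVerts F₂ = {a, b} ∧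
      P.rs.EdgeOnFace F₁ a b ∧ P.rs.EdgeOnFace F₂ a b) := by
  set I := P.rs.faceVerts F₁ ∩ P.rs.faceVerts F₂
  rcases I.eq_empty_or_nonempty with hI | ⟨u, hu⟩
  · exact .inl hI
  by_cases hsub : I ⊆ {u}
  · exact .inr (.inl ⟨u, hsub.antisymm (Set.singleton_subset_iff.2 hu)⟩)
  obtain ⟨v, hv, hvu⟩ := Set.not_subset.1 hsub
  obtain ⟨d₀, rfl, rfl, hd₀⟩ := P.exists_dart_forall_eq_or_eq_rot h3 hne (Ne.symm hvu) hu hv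
  obtain ⟨c₁, hc₁, hc₁u⟩ := hu.1
  obtain ⟨c₂, hc₂, hc₂u⟩ := hu.2
  have hc₁₂ : c₁ ≠ c₂ := by rintro rfl; exact hne (hc₁.symm.trans hc₂)
  refine .inr (.inr ⟨_, _, d₀.adj, ?_, ?_, ?_⟩)
  · refine Set.Subset.antisymm (fun w hw => ?_)
      (Set.insert_subset hu (Set.singleton_subset_iff.2 hv))
    by_contra hwuv
    obtain ⟨d₁, -, rfl, hd₁⟩ :=
      P.exists_dart_forall_eq_or_eq_rot h3 hne (fun h => hwuv (.inl h.symm)) hu hw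
    have hdeg := h3.three_le_ncard_neighborSet d₀.fst
    have := Perm.eq_of_mem_pair_apply hc₁₂ (P.rs.rot_rot_apply_ne hdeg) (hd₀ c₁ hc₁u (.inl hc₁))
      (hd₁ c₁ hc₁u (.inl hc₁)) (hd₀ c₂ hc₂u (.inr hc₂))
      (hd₁ c₂ hc₂u (.inr hc₂))
    exact hwuv (.inr (congrArg (fun d : G.Dart => d.snd) this).symm)
  · exact hc₁ ▸ P.rs.edgeOnFace_of_eq_or_eq_rot (hd₀ c₁ hc₁u (.inl hc₁))
  · exact hc₂ ▸ P.rs.edgeOnFace_of_eq_or_eq_rot (hd₀ c₂ hc₂u (.inr hc₂))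
end

section
/- If G is a 4-connected plane graph such that the open neighbourhood N(u) induces a connected subgraph for every vertex u of G, then G does not have a stable minimal cut, i.e., no minimal cut of G is an independent set. -/
open SimpleGraph

variable {V : Type} [Fintype V] [DecidableEq V]

/-!
Take a stable minimal cut `S` and any `s ∈ S`. Stability puts the whole neighbourhood `N(s)`
outside `S`, and minimality makes `G - (S \ {s})` connected. A path of `G - (S \ {s})` leaves
`G - S` only by passing through `s`, entering and leaving through two vertices of `N(s)`; since
`N(s)` is connected this detour can be replaced by a path inside `N(s) ⊆ V \ S`. Hence `G - S`
is connected, contradicting that `S` is a cut.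
-/

theorem SimpleGraph.Preconnected.induce_compl_of_induce_compl_diff_singleton {α : Type*}
    {G : SimpleGraph α} {S : Set α} {s : α} (hconn : (G.induce (S \ {s})ᶜ).Preconnected)
    (hN : G.neighborSet s ⊆ Sᶜ) (hNconn : (G.induce (G.neighborSet s)).Connected) :
    (G.induce Sᶜ).Preconnected := by
  classical
  have hsub : Sᶜ ⊆ (S \ {s})ᶜ := Set.compl_subset_compl.mpr Set.sdiff_subset
  have eq_of_notMem (x : ↥(S \ {s})ᶜ) (hx : x.1 ∉ Sᶜ) : x.1 = s := by
    by_contra hne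
    exact x.2 ⟨Set.notMem_compl_iff.mp hx, hne⟩
  have reach_nbr (v w : α) (hv : v ∈ G.neighborSet s) (hw : w ∈ G.neighborSet s) :
      (G.induce Sᶜ).Reachable ⟨v, hN hv⟩ ⟨w, hN hw⟩ :=
    (hNconn.preconnected ⟨v, hv⟩ ⟨w, hw⟩).map (G.induceHomOfLE hN).toHom
  obtain ⟨⟨n₀, hn₀⟩⟩ := hNconn.nonempty
  let f : ↥(S \ {s})ᶜ → ↥Sᶜ := fun x =>
    if hx : x.1 ∈ Sᶜ then ⟨x, hx⟩ else ⟨n₀, hN hn₀⟩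
  have reach_of_adj (x y : ↥(S \ {s})ᶜ) (hxy : G.Adj x y) (hx : x.1 ∈ Sᶜ) :
      (G.induce Sᶜ).Reachable (f x) (f y) := by
    by_cases hy : y.1 ∈ Sᶜ
    · simp only [f, dif_pos hx, dif_pos hy]
      exact Adj.reachable (G := G.induce Sᶜ) hxy
    · simp only [f, dif_pos hx, dif_neg hy]
      have hxN : G.Adj y x := hxy.symm
      rw [eq_of_notMem y hy] at hxN
      exact reach_nbr _ _ hxN hn₀
  have lift : ∀ x y : ↥(S \ {s})ᶜ, G.Adj x y → (G.induce Sᶜ).Reachable (f x) (f y) := by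
    intro x y hxy
    by_cases hx : x.1 ∈ Sᶜ
    · exact reach_of_adj x y hxy hx
    by_cases hy : y.1 ∈ Sᶜ
    · exact (reach_of_adj y x hxy.symm hy).symm
    rw [eq_of_notMem x hx, eq_of_notMem y hy] at hxy
    exact (G.irrefl hxy).elim
  intro u v
  have hfu : f ⟨u, hsub u.2⟩ = u := dif_pos u.2
  have hfv : f ⟨v, hsub v.2⟩ = v := dif_pos v.2
  rw [← hfu, ← hfv, reachable_iff_reflTransGen]
  exact Relation.ReflTransGen.lift' f
    (fun x y hxy => (reachable_iff_reflTransGen _ _).mp (lift x y hxy)) _ _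
    ((reachable_iff_reflTransGen _ _).mp (hconn _ _))

theorem IsCut.nonempty {α : Type} {G : SimpleGraph α} {S : Set α} (hG : G.Preconnected)
    (hS : IsCut G S) : S.Nonempty := by
  rw [Set.nonempty_iff_ne_empty]
  rintro rfl
  apply hS
  rw [Set.compl_empty]
  exact (induceUnivIso G).preconnected_iff.mpr hG

theorem IsMinimalCut.exists_adj {α : Type} {G : SimpleGraph α} {S : Set α} (hG : G.Preconnected)
    (hnbr : ∀ u : α, (G.induce (G.neighborSet u)).Connected) (hS : IsMinimalCut G S) :
    ∃ a ∈ S, ∃ b ∈ S, G.Adj a b := by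
  obtain ⟨s, hs⟩ := hS.1.nonempty hG
  by_contra! hstab
  have hN : G.neighborSet s ⊆ Sᶜ := fun t hst htS => hstab s hs t htS hst
  exact hS.1 <| (hS.2 _ (Set.sdiff_singleton_ssubset.mpr hs)).preconnected
    |>.induce_compl_of_induce_compl_diff_singleton hN (hnbr s)

theorem stmt_17_general (G : SimpleGraph V) (P : PlaneEmbedding G)
    (hnbr : ∀ u : V, (G.induce (G.neighborSet u)).Connected) :
    ¬ ∃ S : Set V, IsMinimalCut G S ∧ ∀ a ∈ S, ∀ b ∈ S, ¬ G.Adj a b := by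
  rintro ⟨S, hS, hstab⟩
  obtain ⟨a, ha, b, hb, hab⟩ := hS.exists_adj P.connected.preconnected hnbr
  exact hstab a ha b hb hab

/-- A 4-connected plane graph all of whose open neighbourhoods induce
connected subgraphs has no stable (independent) minimal cut. -/
theorem stmt_17 (G : SimpleGraph V) (P : PlaneEmbedding G) (h4 : IsKConnected 4 G)
    (hnbr : ∀ u : V, (G.induce (G.neighborSet u)).Connected) :
    ¬ ∃ S : Set V, IsMinimalCut G S ∧ ∀ a ∈ S, ∀ b ∈ S, ¬ G.Adj a b :=
  stmt_17_general G P hnbr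
end
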